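/- Let d = L·d', d' ≥ 3, and let v = [v_1, …, v_L] be uniform on S^{d-1}. Define the regularized vector r_L(v) = [v_1/(√L ‖v_1‖), …, v_L/(√L ‖v_L‖)]. Then E[⟨v, r_L(v)⟩] = √L · Γ((d+L)/(2L)) Γ(d/2) / (Γ(d/(2L)) Γ((d+1)/2)). -/

import Mathlib

open MeasureTheory Measure Metric Real Set
open scoped RealInnerProductSpace ENNReal NNReal

/-- The uniform (normalized surface) probability measure on the unit sphere
in `EuclideanSpace ℝ (Fin n)`. -/
noncomputable def uniformSphere (n : ℕ) :
    Measure (Metric.sphere (0 : EuclideanSpace ℝ (Fin n)) 1) :=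
  ((volume : Measure (EuclideanSpace ℝ (Fin n))).toSphere Set.univ)⁻¹ •
    (volume : Measure (EuclideanSpace ℝ (Fin n))).toSphere

/-- The Beta distribution with parameters `a` and `b`. -/
noncomputable def betaMeasure (a b : ℝ) : Measure ℝ :=
  volume.withDensity fun t =>
    ENNReal.ofReal ((Set.Ioo (0:ℝ) 1).indicator
      (fun t => Real.Gamma (a + b) / (Real.Gamma a * Real.Gamma b) *
        t ^ (a - 1) * (1 - t) ^ (b - 1)) t)

/-- The regularized incomplete Beta function `I_t(a, b)` (equal to `0` for `t ≤ 0`). -/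
noncomputable def regIncBeta (a b t : ℝ) : ℝ :=
  (∫ s in Set.Ioc (0:ℝ) t, s ^ (a - 1) * (1 - s) ^ (b - 1)) /
    (Real.Gamma a * Real.Gamma b / Real.Gamma (a + b))

/-- The block-wise regularized vector `r_L(v)`: each of the `L` blocks of
dimension `d'` is normalized to have norm `1/√L`. -/
noncomputable def regularize (L d' : ℕ) (v : EuclideanSpace ℝ (Fin (L * d'))) :
    EuclideanSpace ℝ (Fin (L * d')) :=
  WithLp.toLp 2 fun p => v p /
    (Real.sqrt L *
      Real.sqrt (∑ j : Fin d', (v (finProdFinEquiv ((finProdFinEquiv.symm p).1, j))) ^ 2))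

/-!
Gaussian integration in polar coordinates: for a positively homogeneous `f` on `ℝⁿ`,
`∫ f(x) e^{-‖x‖²} dx = (∫_{S^{n-1}} f dσ) · Γ((n+1)/2) / 2`. For the block norm `x ↦ ‖x_i‖` the
Gaussian weight factorizes over the `L` blocks, so the left side is
`(∫_{ℝ^{d'}} ‖y‖ e^{-‖y‖²} dy) · π^{(L-1)d'/2}`, and the first factor is again computed in polar
coordinates. Dividing by the area `2π^{n/2}/Γ(n/2)` of `S^{n-1}` gives
`E‖v_i‖ = Γ((d'+1)/2) Γ(n/2) / (Γ(d'/2) Γ((n+1)/2))`, and `⟪v, r_L(v)⟫ = ∑ᵢ ‖v_i‖ / √L`.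
-/

theorem integral_mul_exp_neg_sq_volumeIoiPow (n : ℕ) :
    ∫ r : Ioi (0 : ℝ), r.1 * rexp (-r.1 ^ 2) ∂volumeIoiPow n = Gamma ((n + 2) / 2) / 2 := by
  simp only [volumeIoiPow, ENNReal.ofReal]
  rw [integral_withDensity_eq_integral_smul, integral_subtype_comap measurableSet_Ioi
      (fun r : ℝ ↦ Real.toNNReal (r ^ n) • (r * rexp (-r ^ 2))),
    setIntegral_congr_fun measurableSet_Ioi (g := fun r ↦ r ^ (n + 1 : ℝ) * rexp (-r ^ (2 : ℝ)))
      fun r hr ↦ ?_, integral_rpow_mul_exp_neg_rpow two_pos (by linarith [n.cast_nonneg (α := ℝ)])]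
  · ring_nf
  · rw [NNReal.smul_def, Real.coe_toNNReal _ (pow_nonneg hr.out.le _), smul_eq_mul]
    dsimp only
    rw [rpow_add hr.out, rpow_natCast, rpow_one, rpow_two]
    ring
  · exact (measurable_subtype_coe.pow_const _).real_toNNReal

theorem integral_mul_exp_neg_sq_norm_of_homogeneous {E : Type*} [NormedAddCommGroup E]
    [NormedSpace ℝ E] [FiniteDimensional ℝ E] [MeasurableSpace E] [BorelSpace E] [Nontrivial E]
    (μ : Measure E) [μ.IsAddHaarMeasure] {f : E → ℝ} (hf : ∀ c : ℝ, 0 < c → ∀ x, f (c • x) = c * f x) :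
    ∫ x, f x * rexp (-‖x‖ ^ 2) ∂μ
      = (∫ v, f v ∂μ.toSphere) * (Gamma ((Module.finrank ℝ E + 1) / 2) / 2) := by
  calc ∫ x, f x * rexp (-‖x‖ ^ 2) ∂μ
      = ∫ x : ({0}ᶜ : Set E), f x * rexp (-‖(x : E)‖ ^ 2) ∂μ.comap (↑) := by
        rw [integral_subtype_comap (measurableSet_singleton _).compl
          (fun x ↦ f x * rexp (-‖x‖ ^ 2)), restrict_compl_singleton]
    _ = ∫ y, f y.1 * (y.2.1 * rexp (-y.2.1 ^ 2))
          ∂μ.toSphere.prod (volumeIoiPow (Module.finrank ℝ E - 1)) := by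
        rw [← μ.measurePreserving_homeomorphUnitSphereProd.integral_comp
          (Homeomorph.measurableEmbedding _)]
        refine integral_congr_ae (.of_forall fun x ↦ ?_)
        have hx : ‖(x : E)‖ ≠ 0 := norm_ne_zero_iff.mpr x.2
        simp only [homeomorphUnitSphereProd_apply_fst_coe,
          homeomorphUnitSphereProd_apply_snd_coe, hf _ (inv_pos.mpr (norm_pos_iff.mpr x.2))]
        field_simp
    _ = _ := by
        rw [integral_prod_mul (fun v : sphere (0 : E) 1 ↦ f v)
            (fun r : Ioi (0 : ℝ) ↦ r.1 * rexp (-r.1 ^ 2)),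
          integral_mul_exp_neg_sq_volumeIoiPow, Nat.cast_pred Module.finrank_pos]
        ring_nf

theorem measurePreserving_curry (ι κ α : Type*) [Fintype ι] [Fintype κ] [MeasurableSpace α]
    (μ : Measure α) [SigmaFinite μ] :
    MeasurePreserving (MeasurableEquiv.curry ι κ α) (Measure.pi fun _ ↦ μ)
      (Measure.pi fun _ ↦ Measure.pi fun _ ↦ μ) := by
  refine MeasurePreserving.symm _ ⟨(MeasurableEquiv.curry ι κ α).symm.measurable, ?_⟩
  refine (Measure.pi_eq fun s hs ↦ ?_).symm
  have : (MeasurableEquiv.curry ι κ α).symm ⁻¹' univ.pi s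
      = univ.pi fun i ↦ univ.pi fun j ↦ s (i, j) := by
    ext x; simp [MeasurableEquiv.curry, Function.uncurry]
  rw [MeasurableEquiv.map_apply, this, pi_pi, Fintype.prod_prod_type]
  simp only [pi_pi]

noncomputable def blockEquiv (L d' : ℕ) :
    EuclideanSpace ℝ (Fin (L * d')) ≃ᵐ (Fin L → EuclideanSpace ℝ (Fin d')) :=
  (MeasurableEquiv.toLp 2 _).symm.trans <|
    (MeasurableEquiv.piCongrLeft (fun _ ↦ ℝ) finProdFinEquiv).symm.trans <|
      (MeasurableEquiv.curry _ _ ℝ).trans <|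
        MeasurableEquiv.piCongrRight fun _ ↦ MeasurableEquiv.toLp 2 _

@[simp]
theorem blockEquiv_apply (L d' : ℕ) (x : EuclideanSpace ℝ (Fin (L * d'))) (i : Fin L)
    (j : Fin d') :
    blockEquiv L d' x i j = x (finProdFinEquiv (i, j)) :=
  rfl

theorem blockEquiv_smul (L d' : ℕ) (c : ℝ) (x : EuclideanSpace ℝ (Fin (L * d'))) (i : Fin L) :
    blockEquiv L d' (c • x) i = c • blockEquiv L d' x i := by
  ext j
  simp

theorem continuous_blockEquiv (L d' : ℕ) : Continuous (blockEquiv L d') := by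
  change Continuous fun (x : EuclideanSpace ℝ (Fin (L * d'))) (i : Fin L) ↦
    (WithLp.toLp 2 fun j ↦ x (finProdFinEquiv (i, j)) : EuclideanSpace ℝ (Fin d'))
  fun_prop

theorem measurePreserving_blockEquiv (L d' : ℕ) : MeasurePreserving (blockEquiv L d') :=
  (EuclideanSpace.volume_preserving_symm_measurableEquiv_toLp _).trans <|
    ((volume_measurePreserving_piCongrLeft (fun _ ↦ ℝ) finProdFinEquiv).symm _).trans <|
      (measurePreserving_curry _ _ ℝ volume).trans <|
        volume_preserving_pi fun _ ↦ PiLp.volume_preserving_toLp _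

theorem sum_norm_blockEquiv_sq (L d' : ℕ) (x : EuclideanSpace ℝ (Fin (L * d'))) :
    ∑ i, ‖blockEquiv L d' x i‖ ^ 2 = ‖x‖ ^ 2 := by
  simp_rw [EuclideanSpace.norm_sq_eq, ← Equiv.sum_comp finProdFinEquiv, Fintype.sum_prod_type]
  rfl

theorem regularize_apply (L d' : ℕ) (v : EuclideanSpace ℝ (Fin (L * d'))) (i : Fin L) (j : Fin d') :
    regularize L d' v (finProdFinEquiv (i, j))
      = v (finProdFinEquiv (i, j)) / (√L * ‖blockEquiv L d' v i‖) := by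
  simp only [regularize, PiLp.toLp_apply, Equiv.symm_apply_apply, EuclideanSpace.norm_eq,
    blockEquiv_apply, Real.norm_eq_abs, sq_abs]

theorem inner_regularize (L d' : ℕ) (v : EuclideanSpace ℝ (Fin (L * d'))) :
    ⟪v, regularize L d' v⟫ = (∑ i, ‖blockEquiv L d' v i‖) / √L := by
  rw [PiLp.inner_apply, ← Equiv.sum_comp finProdFinEquiv, Fintype.sum_prod_type, Finset.sum_div]
  refine Finset.sum_congr rfl fun i _ ↦ ?_
  set b := ‖blockEquiv L d' v i‖
  have hb : b ^ 2 = ∑ j, v (finProdFinEquiv (i, j)) ^ 2 := by simp [b, EuclideanSpace.norm_sq_eq]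
  calc ∑ j, ⟪v (finProdFinEquiv (i, j)), regularize L d' v (finProdFinEquiv (i, j))⟫
      = b ^ 2 / (√L * b) := by
        simp only [regularize_apply, RCLike.inner_apply, conj_trivial, hb, Finset.sum_div]
        exact Finset.sum_congr rfl fun j _ ↦ by ring
    _ = b / √L := by rw [sq, div_mul_eq_div_div_swap, mul_self_div_self]

theorem integral_norm_blockEquiv_mul_exp_neg_sq_norm (L d' : ℕ) (i : Fin L) :
    ∫ x, ‖blockEquiv L d' x i‖ * rexp (-‖x‖ ^ 2)
      = (∫ y : EuclideanSpace ℝ (Fin d'), ‖y‖ * rexp (-‖y‖ ^ 2))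
          * (π ^ (d' / 2 : ℝ)) ^ (L - 1) := by
  have hgauss : ∫ y : EuclideanSpace ℝ (Fin d'), rexp (-‖y‖ ^ 2) = π ^ (d' / 2 : ℝ) := by
    simpa using
      GaussianFourier.integral_rexp_neg_mul_sq_norm (V := EuclideanSpace ℝ (Fin d')) one_pos
  have hprod (y : Fin L → EuclideanSpace ℝ (Fin d')) : ‖y i‖ * rexp (-∑ k, ‖y k‖ ^ 2)
      = ∏ k, (if k = i then ‖y k‖ else 1) * rexp (-‖y k‖ ^ 2) := by
    rw [Finset.prod_mul_distrib, Finset.prod_ite_eq', if_pos (Finset.mem_univ _), ← Real.exp_sum,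
      Finset.sum_neg_distrib]
  calc ∫ x, ‖blockEquiv L d' x i‖ * rexp (-‖x‖ ^ 2)
      = ∫ y : Fin L → EuclideanSpace ℝ (Fin d'), ‖y i‖ * rexp (-∑ k, ‖y k‖ ^ 2) := by
        rw [← (measurePreserving_blockEquiv L d').integral_comp'
          (fun y ↦ ‖y i‖ * rexp (-∑ k, ‖y k‖ ^ 2))]
        simp_rw [sum_norm_blockEquiv_sq]
    _ = ∏ k, ∫ z : EuclideanSpace ℝ (Fin d'), (if k = i then ‖z‖ else 1) * rexp (-‖z‖ ^ 2) := by
        simp_rw [hprod]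
        exact integral_fintype_prod_volume_eq_prod
          fun k (z : EuclideanSpace ℝ (Fin d')) ↦ (if k = i then ‖z‖ else 1) * rexp (-‖z‖ ^ 2)
    _ = _ := by
        rw [← Finset.mul_prod_erase _ _ (Finset.mem_univ i)]
        congr 1
        · simp only [↓reduceIte]
        rw [Finset.prod_congr rfl fun k hk ↦ show _ = π ^ (d' / 2 : ℝ) by
            simp only [if_neg (Finset.ne_of_mem_erase hk), one_mul, hgauss],
          Finset.prod_const, Finset.card_erase_of_mem (Finset.mem_univ i), Finset.card_univ,
          Fintype.card_fin]

section Sphere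

variable {E : Type*} [NormedAddCommGroup E] [InnerProductSpace ℝ E] [FiniteDimensional ℝ E]
  [MeasurableSpace E] [BorelSpace E] [Nontrivial E]

theorem volume_toSphere_real_univ :
    (volume : Measure E).toSphere.real univ
      = 2 * π ^ (Module.finrank ℝ E / 2 : ℝ) / Gamma (Module.finrank ℝ E / 2) := by
  have hn : (0 : ℝ) < Module.finrank ℝ E := Nat.cast_pos.mpr Module.finrank_pos
  rw [toSphere_real_apply_univ, measureReal_def, InnerProductSpace.volume_ball, ENNReal.ofReal_one,
    one_pow, one_mul, ENNReal.toReal_ofReal (by positivity), Gamma_add_one (by positivity),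
    sqrt_eq_rpow, ← rpow_natCast, ← rpow_mul pi_pos.le]
  field_simp

theorem integral_norm_mul_exp_neg_sq_norm :
    ∫ x : E, ‖x‖ * rexp (-‖x‖ ^ 2)
      = π ^ (Module.finrank ℝ E / 2 : ℝ) * Gamma ((Module.finrank ℝ E + 1) / 2)
          / Gamma (Module.finrank ℝ E / 2) := by
  rw [integral_mul_exp_neg_sq_norm_of_homogeneous volume
      fun c hc x ↦ by rw [norm_smul, Real.norm_of_nonneg hc.le],
    integral_congr_ae (.of_forall fun v ↦ norm_eq_of_mem_sphere v), integral_const, smul_eq_mul,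
    mul_one, volume_toSphere_real_univ]
  ring

end Sphere

theorem integral_uniformSphere (n : ℕ) (f : sphere (0 : EuclideanSpace ℝ (Fin n)) 1 → ℝ) :
    ∫ v, f v ∂uniformSphere n
      = (∫ v, f v ∂(volume : Measure (EuclideanSpace ℝ (Fin n))).toSphere)
          / (volume : Measure (EuclideanSpace ℝ (Fin n))).toSphere.real univ := by
  rw [uniformSphere, integral_smul_measure, ENNReal.toReal_inv, smul_eq_mul, measureReal_def,
    inv_mul_eq_div]

theorem integral_norm_blockEquiv_toSphere (L : ℕ) {d' : ℕ} (hd : 0 < d') (i : Fin L) :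
    ∫ v, ‖blockEquiv L d' v i‖ ∂(volume : Measure (EuclideanSpace ℝ (Fin (L * d')))).toSphere
      = 2 * π ^ ((L * d' : ℕ) / 2 : ℝ) * Gamma ((d' + 1) / 2)
          / (Gamma (d' / 2) * Gamma (((L * d' : ℕ) + 1) / 2)) := by
  have : Nonempty (Fin (L * d')) := ⟨⟨0, Nat.mul_pos i.pos hd⟩⟩
  have : Nonempty (Fin d') := ⟨⟨0, hd⟩⟩
  have hpolar := integral_mul_exp_neg_sq_norm_of_homogeneous volume
    (f := fun x : EuclideanSpace ℝ (Fin (L * d')) ↦ ‖blockEquiv L d' x i‖)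
    fun c hc x ↦ by rw [blockEquiv_smul, norm_smul, Real.norm_of_nonneg hc.le]
  rw [integral_norm_blockEquiv_mul_exp_neg_sq_norm, integral_norm_mul_exp_neg_sq_norm,
    finrank_euclideanSpace_fin, finrank_euclideanSpace_fin] at hpolar
  have hpi : π ^ ((L * d' : ℕ) / 2 : ℝ) = π ^ (d' / 2 : ℝ) * (π ^ (d' / 2 : ℝ)) ^ (L - 1) := by
    rw [← pow_succ', Nat.sub_add_cancel i.pos, ← rpow_natCast, ← rpow_mul pi_pos.le]
    push_cast
    ring_nf
  have : 0 < Gamma (d' / 2) := Gamma_pos_of_pos (by positivity)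
  have : 0 < Gamma ((((L * d' : ℕ) : ℝ) + 1) / 2) := Gamma_pos_of_pos (by positivity)
  rw [hpi]
  field_simp at hpolar ⊢
  linarith

theorem stmt16_general (L d' : ℕ) :
    ∫ v : Metric.sphere (0 : EuclideanSpace ℝ (Fin (L * d'))) 1,
        ⟪(v : EuclideanSpace ℝ (Fin (L * d'))),
          regularize L d' (v : EuclideanSpace ℝ (Fin (L * d')))⟫
        ∂(uniformSphere (L * d'))
      = Real.sqrt L *
          (Real.Gamma (((L * d' : ℕ) + (L : ℝ)) / (2 * L)) * Real.Gamma ((L * d' : ℕ) / 2)) /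
          (Real.Gamma ((L * d' : ℕ) / (2 * (L : ℝ))) * Real.Gamma (((L * d' : ℕ) + 1) / 2)) := by
  rcases (L * d').eq_zero_or_pos with hn | hn
  · -- the sphere is empty, and the right side vanishes through `√0 = 0` or `Γ 0 = 0`
    have : Subsingleton (EuclideanSpace ℝ (Fin (L * d'))) := by rw [hn]; infer_instance
    rw [integral_of_isEmpty]
    rcases Nat.mul_eq_zero.mp hn with rfl | rfl <;> simp
  obtain ⟨hL, hd⟩ := CanonicallyOrderedAdd.mul_pos.mp hn
  have : Nonempty (Fin (L * d')) := ⟨⟨0, hn⟩⟩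
  have hint (i : Fin L) : Integrable (fun v : sphere (0 : EuclideanSpace ℝ (Fin (L * d'))) 1 ↦
      ‖blockEquiv L d' v i‖) (volume : Measure (EuclideanSpace ℝ (Fin (L * d')))).toSphere :=
    ((continuous_apply i).comp ((continuous_blockEquiv L d').comp continuous_subtype_val)).norm
      |>.integrable_of_hasCompactSupport (.of_compactSpace _)
  have harg₁ : ((L * d' : ℕ) + (L : ℝ)) / (2 * L) = (d' + 1) / 2 := by push_cast; field_simp
  have harg₂ : ((L * d' : ℕ) : ℝ) / (2 * L) = d' / 2 := by push_cast; field_simp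
  simp_rw [inner_regularize]
  rw [integral_uniformSphere, integral_div, integral_finsetSum _ fun i _ ↦ hint i,
    Finset.sum_congr rfl fun i _ ↦ integral_norm_blockEquiv_toSphere L hd i, Finset.sum_const,
    Finset.card_univ, Fintype.card_fin, nsmul_eq_mul, volume_toSphere_real_univ,
    finrank_euclideanSpace_fin, harg₁, harg₂]
  have : 0 < Gamma (d' / 2) := Gamma_pos_of_pos (by positivity)
  have : 0 < Gamma (((L * d' : ℕ) : ℝ) / 2) := Gamma_pos_of_pos (by positivity)
  have : 0 < Gamma ((((L * d' : ℕ) : ℝ) + 1) / 2) := Gamma_pos_of_pos (by positivity)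
  field_simp
  rw [sq_sqrt (Nat.cast_nonneg L)]

/-- for `v` uniform on `S^{d-1}` with `d = L·d'`, `d' ≥ 3`,
`E[⟪v, r_L(v)⟫] = √L · Γ((d+L)/(2L)) Γ(d/2) / (Γ(d/(2L)) Γ((d+1)/2))`. -/
theorem stmt16 (L d' : ℕ) (hL : 1 ≤ L) (hd' : 3 ≤ d') :
    ∫ v : Metric.sphere (0 : EuclideanSpace ℝ (Fin (L * d'))) 1,
        ⟪(v : EuclideanSpace ℝ (Fin (L * d'))),
          regularize L d' (v : EuclideanSpace ℝ (Fin (L * d')))⟫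
        ∂(uniformSphere (L * d'))
      = Real.sqrt L *
          (Real.Gamma (((L * d' : ℕ) + (L : ℝ)) / (2 * L)) * Real.Gamma ((L * d' : ℕ) / 2)) /
          (Real.Gamma ((L * d' : ℕ) / (2 * (L : ℝ))) * Real.Gamma (((L * d' : ℕ) + 1) / 2)) :=
  stmt16_general L d'
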